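/- Let G = (A ∪ H, E) be a finite bipartite graph with capacities b satisfying b(a) = 1 for all a ∈ A, let A' ⊆ A, let M be a maximum b-matching of G, and let B' be the set of vertices of A' that are matched in M. (i) If there exists an M-alternating path P = (a_1, h_1, a_2, …, h_{n−1}, a_n) whose first edge (a_1,h_1) is not in M, whose last edge (h_{n−1},a_n) is in M, with a_1 ∈ A' \ B' unmatched in M and a_n ∉ A', then M ⊕ P is a maximum b-matching of G and the set of vertices of A' matched in M ⊕ P is exactly B' ∪ {a_1}. (ii) If no such path exists, then |B'| equals the maximum, over all maximum b-matchings M* of G, of the number of vertices of A' matched in M*. -/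
import Mathlib
set_option linter.unusedSectionVars false


open Finset

section MatchingCore

variable {A H : Type*} [DecidableEq A] [DecidableEq H]

/-- The degree of an agent `a` in an edge set `M`. -/
def adeg (M : Finset (A × H)) (a : A) : ℕ := (M.filter fun e => e.1 = a).card

/-- The degree of a house `h` in an edge set `M`. -/
def hdeg (M : Finset (A × H)) (h : H) : ℕ := (M.filter fun e => e.2 = h).card

/-- `M` is a b-matching of the instance with edge set `E` and capacities `bA` on agents
and `bH` on houses. -/
def IsBM (E : Finset (A × H)) (bA : A → ℕ) (bH : H → ℕ) (M : Finset (A × H)) : Prop :=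
  M ⊆ E ∧ (∀ a : A, adeg M a ≤ bA a) ∧ (∀ h : H, hdeg M h ≤ bH h)

/-- `M` is a maximum b-matching: a b-matching of the largest possible cardinality. -/
def IsMaxBM (E : Finset (A × H)) (bA : A → ℕ) (bH : H → ℕ) (M : Finset (A × H)) : Prop :=
  IsBM E bA bH M ∧ ∀ M' : Finset (A × H), IsBM E bA bH M' → M'.card ≤ M.card

/-- Agent `a` is matched in `M`. -/
def Matched (M : Finset (A × H)) (a : A) : Prop := ∃ h : H, (a, h) ∈ M

/-- An `M`-alternating path from an agent to an agent, with vertex sequence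
`a 0, h 0, a 1, h 1, …, h t, a (t+1)`, beginning with an edge not in `M` and ending with
an edge of `M`, with no edge repeated. -/
structure AltAA (E M : Finset (A × H)) (t : ℕ) where
  a : Fin (t + 2) → A
  h : Fin (t + 1) → H
  fwd_mem : ∀ i : Fin (t + 1), (a i.castSucc, h i) ∈ E
  fwd_not : ∀ i : Fin (t + 1), (a i.castSucc, h i) ∉ M
  bwd_mem : ∀ i : Fin (t + 1), (a i.succ, h i) ∈ M
  fwd_inj : ∀ i j : Fin (t + 1), (a i.castSucc, h i) = (a j.castSucc, h j) → i = j
  bwd_inj : ∀ i j : Fin (t + 1), (a i.succ, h i) = (a j.succ, h j) → i = j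

namespace AltAA

variable {E M : Finset (A × H)} {t : ℕ}

/-- The first agent of an alternating path. -/
def first (P : AltAA E M t) : A := P.a 0

/-- The last agent of an alternating path. -/
def last (P : AltAA E M t) : A := P.a (Fin.last (t + 1))

/-- The edge set of an alternating path. -/
def edges (P : AltAA E M t) : Finset (A × H) :=
  (Finset.univ.image fun i : Fin (t + 1) => (P.a i.castSucc, P.h i)) ∪
    (Finset.univ.image fun i : Fin (t + 1) => (P.a i.succ, P.h i))

end AltAA

open Classical in
/-- The number of vertices of the part `A_i` (the fiber of `part` over `i`) that are
matched in `M`. -/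
noncomputable def nMatched [Fintype A] {p : ℕ} (part : A → Fin p) (M : Finset (A × H)) (i : Fin p) :
    ℕ :=
  (Finset.univ.filter fun a : A => part a = i ∧ ∃ h : H, (a, h) ∈ M).card

/-- A partition matching: a maximum b-matching (all agents having capacity 1) that
matches at least `kk i` vertices of the part `A_i` for every `i`. -/
def IsPartitionMatching [Fintype A] (E : Finset (A × H)) (bH : H → ℕ) {p : ℕ}
    (part : A → Fin p) (kk : Fin p → ℕ) (M : Finset (A × H)) : Prop :=
  IsMaxBM E (fun _ => 1) bH M ∧ ∀ i : Fin p, kk i ≤ nMatched part M i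

/-- An improving sequence for the index `i` with respect to `M`: a sequence of pairwise
edge-disjoint `M`-alternating paths `P 0, …, P s`, each beginning with a non-`M`-edge and
ending with an `M`-edge, whose first agent is an unmatched vertex of `A_i`, whose last
agent lies in a part `A_{i'}` in which `M` matches strictly more than `kk i'` vertices,
and such that consecutive paths link up inside a common part as prescribed. -/
structure ImpSeq [Fintype A] (E M : Finset (A × H)) {p : ℕ} (part : A → Fin p)
    (kk : Fin p → ℕ) (i : Fin p) where
  s : ℕ
  P : Fin (s + 1) → (t : ℕ) × AltAA E M t
  disj : ∀ j j' : Fin (s + 1), j ≠ j' → Disjoint (P j).2.edges (P j').2.edges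
  startPart : part (P 0).2.first = i
  startUnmatched : ¬ Matched M (P 0).2.first
  endExceeds :
    kk (part (P (Fin.last s)).2.last) < nMatched part M (part (P (Fin.last s)).2.last)
  chain : ∀ j : Fin s,
    part ((P j.castSucc).2.last) = part ((P j.succ).2.first) ∧
      ((P j.castSucc).2.last = (P j.succ).2.first ∨ ¬ Matched M ((P j.succ).2.first))

end MatchingCore
section Helpers
variable {A H : Type*} [DecidableEq A] [DecidableEq H]

lemma matched_iff_adeg {M : Finset (A × H)} {x : A} : Matched M x ↔ 0 < adeg M x := by
  unfold Matched adeg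
  rw [Finset.card_pos]
  constructor
  · rintro ⟨h, hm⟩; exact ⟨(x, h), by simp [Finset.mem_filter, hm]⟩
  · rintro ⟨⟨a, h⟩, he⟩
    simp only [Finset.mem_filter] at he
    exact ⟨h, he.2 ▸ he.1⟩

lemma unique_edge {M : Finset (A × H)} (hMa : ∀ x, adeg M x ≤ 1) {x : A} {h1 h2 : H}
    (e1 : (x, h1) ∈ M) (e2 : (x, h2) ∈ M) : h1 = h2 := by
  have hle : (M.filter fun e => e.1 = x).card ≤ 1 := hMa x
  have h := Finset.card_le_one.mp hle (x, h1)
    (by simp [Finset.mem_filter, e1]) (x, h2) (by simp [Finset.mem_filter, e2])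
  simpa using congrArg Prod.snd h

lemma filter_surgery {X D I : Finset (A × H)} (hD : D ⊆ X) (hI : ∀ e ∈ I, e ∉ X)
    (p : A × H → Prop) [DecidablePred p] :
    (((X \ D) ∪ I).filter p).card + (D.filter p).card
      = (X.filter p).card + (I.filter p).card := by
  have h1 : (X \ D).filter p = X.filter p \ D.filter p := by
    ext e; simp only [Finset.mem_filter, Finset.mem_sdiff]; tauto
  have hsub : D.filter p ⊆ X.filter p := Finset.filter_subset_filter p hD
  have hdisj : Disjoint ((X \ D).filter p) (I.filter p) := by
    rw [Finset.disjoint_left]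
    intro e he hei
    simp only [Finset.mem_filter, Finset.mem_sdiff] at he hei
    exact hI e hei.1 he.1.1
  rw [Finset.filter_union, Finset.card_union_of_disjoint hdisj, h1, Finset.card_sdiff_of_subset hsub]
  have := Finset.card_le_card hsub
  omega

lemma card_surgery {X D I : Finset (A × H)} (hD : D ⊆ X) (hI : ∀ e ∈ I, e ∉ X) :
    ((X \ D) ∪ I).card + D.card = X.card + I.card := by
  have := filter_surgery hD hI (fun _ => True)
  simpa using this

end Helpers


section WalkSec
variable {A H : Type*} [DecidableEq A] [DecidableEq H]

/-- An alternating walk skeleton: `m` forward (non-matching) edges `(a i, h i)` and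
`r` backward (matching) edges `(a (i+1), h i)`, with distinct agents. -/
structure Walk (E M : Finset (A × H)) (m r : ℕ) where
  a : ℕ → A
  h : ℕ → H
  fwdE : ∀ i < m, (a i, h i) ∈ E
  fwdN : ∀ i < m, (a i, h i) ∉ M
  bwdM : ∀ i < r, (a (i + 1), h i) ∈ M
  ainj : ∀ i ≤ r, ∀ j ≤ r, a i = a j → i = j

namespace Walk
variable {E M : Finset (A × H)} {m r : ℕ}

def F (W : Walk E M m r) : Finset (A × H) := (range m).image fun i => (W.a i, W.h i)
def B (W : Walk E M m r) : Finset (A × H) := (range r).image fun i => (W.a (i + 1), W.h i)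
def N (W : Walk E M m r) : Finset (A × H) := (M \ W.B) ∪ W.F

lemma mem_F {W : Walk E M m r} {e} : e ∈ W.F ↔ ∃ i < m, (W.a i, W.h i) = e := by
  simp [F]

lemma mem_B {W : Walk E M m r} {e} : e ∈ W.B ↔ ∃ i < r, (W.a (i + 1), W.h i) = e := by
  simp [B]

lemma B_subset (W : Walk E M m r) : W.B ⊆ M := by
  intro e he; rw [mem_B] at he; obtain ⟨i, hi, rfl⟩ := he; exact W.bwdM i hi

lemma F_not (W : Walk E M m r) : ∀ e ∈ W.F, e ∉ M := by
  intro e he; rw [mem_F] at he; obtain ⟨i, hi, rfl⟩ := he; exact W.fwdN i hi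

lemma filter_F (W : Walk E M m r) (hmr : m ≤ r + 1) (p : A × H → Prop) [DecidablePred p] :
    (W.F.filter p).card = ((range m).filter fun i => p (W.a i, W.h i)).card := by
  unfold F
  rw [Finset.filter_image, Finset.card_image_of_injOn]
  intro i hi j hj hij
  simp only [Finset.coe_filter, Set.mem_setOf_eq, Finset.mem_range] at hi hj
  exact W.ainj i (by omega) j (by omega) (congrArg Prod.fst hij)

lemma filter_B (W : Walk E M m r) (p : A × H → Prop) [DecidablePred p] :
    (W.B.filter p).card = ((range r).filter fun i => p (W.a (i + 1), W.h i)).card := by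
  unfold B
  rw [Finset.filter_image, Finset.card_image_of_injOn]
  intro i hi j hj hij
  simp only [Finset.coe_filter, Set.mem_setOf_eq, Finset.mem_range] at hi hj
  have := W.ainj (i + 1) (by omega) (j + 1) (by omega) (congrArg Prod.fst hij)
  omega

lemma card_F (W : Walk E M m r) (hmr : m ≤ r + 1) : W.F.card = m := by
  have := W.filter_F hmr (fun _ => True)
  simpa using this

lemma card_B (W : Walk E M m r) : W.B.card = r := by
  have := W.filter_B (fun _ => True)
  simpa using this

lemma adeg_eqn (W : Walk E M m r) (hmr : m ≤ r + 1) (x : A) :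
    adeg W.N x + ((range r).filter fun i => W.a (i + 1) = x).card
      = adeg M x + ((range m).filter fun i => W.a i = x).card := by
  have h1 := filter_surgery W.B_subset W.F_not (fun e => e.1 = x)
  unfold N adeg
  rw [W.filter_F hmr (fun e => e.1 = x), W.filter_B (fun e => e.1 = x)] at h1
  exact h1

lemma hdeg_eqn (W : Walk E M m r) (hmr : m ≤ r + 1) (y : H) :
    hdeg W.N y + ((range r).filter fun i => W.h i = y).card
      = hdeg M y + ((range m).filter fun i => W.h i = y).card := by
  have h1 := filter_surgery W.B_subset W.F_not (fun e => e.2 = y)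
  unfold N hdeg
  rw [W.filter_F hmr (fun e => e.2 = y), W.filter_B (fun e => e.2 = y)] at h1
  exact h1

lemma card_N (W : Walk E M m r) (hmr : m ≤ r + 1) : W.N.card + r = M.card + m := by
  have := card_surgery W.B_subset W.F_not
  unfold N
  rw [W.card_F hmr, W.card_B] at this
  exact this

lemma count_a_one (W : Walk E M m r) {n j : ℕ} (hn : n ≤ r + 1) (hj : j < n) :
    ((range n).filter fun i => W.a i = W.a j).card = 1 := by
  have h : (range n).filter (fun i => W.a i = W.a j) = {j} := by
    ext i
    simp only [Finset.mem_filter, Finset.mem_range, Finset.mem_singleton]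
    constructor
    · rintro ⟨hi, hij⟩; exact W.ainj i (by omega) j (by omega) hij
    · rintro rfl; exact ⟨hj, rfl⟩
  rw [h, Finset.card_singleton]

lemma count_a_zero (W : Walk E M m r) {n : ℕ} {x : A} (hx : ∀ i < n, W.a i ≠ x) :
    ((range n).filter fun i => W.a i = x).card = 0 := by
  rw [Finset.card_eq_zero, Finset.filter_eq_empty_iff]
  intro i hi; exact hx i (Finset.mem_range.mp hi)

lemma count_b_one (W : Walk E M m r) {j : ℕ} (hj : j < r) :
    ((range r).filter fun i => W.a (i + 1) = W.a (j + 1)).card = 1 := by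
  have h : (range r).filter (fun i => W.a (i + 1) = W.a (j + 1)) = {j} := by
    ext i
    simp only [Finset.mem_filter, Finset.mem_range, Finset.mem_singleton]
    constructor
    · rintro ⟨hi, hij⟩
      have := W.ainj (i + 1) (by omega) (j + 1) (by omega) hij
      omega
    · rintro rfl; exact ⟨hj, rfl⟩
  rw [h, Finset.card_singleton]

lemma count_b_zero (W : Walk E M m r) {x : A} (hx : ∀ i < r, W.a (i + 1) ≠ x) :
    ((range r).filter fun i => W.a (i + 1) = x).card = 0 := by
  rw [Finset.card_eq_zero, Finset.filter_eq_empty_iff]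
  intro i hi; exact hx i (Finset.mem_range.mp hi)

end Walk
end WalkSec
section Surgery
variable {A H : Type*} [DecidableEq A] [DecidableEq H]
namespace Walk
variable {E M : Finset (A × H)} {m r : ℕ}

lemma adeg_M_zero {M : Finset (A × H)} {x : A} (h : ¬ Matched M x) : adeg M x = 0 := by
  rw [matched_iff_adeg] at h; omega

lemma adeg_M_one {M : Finset (A × H)} (hMa : ∀ x, adeg M x ≤ 1) {x : A} (h : Matched M x) :
    adeg M x = 1 := by
  rw [matched_iff_adeg] at h
  have := hMa x; omega

lemma adeg_N_on (W : Walk E M m r) (hmr : m ≤ r + 1) (hMa : ∀ x, adeg M x ≤ 1)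
    (h0 : ¬ Matched M (W.a 0)) {j : ℕ} (hj : j ≤ r) :
    adeg W.N (W.a j) = if j < m then 1 else 0 := by
  have heq := W.adeg_eqn hmr (W.a j)
  have hF : ((range m).filter fun i => W.a i = W.a j).card = if j < m then 1 else 0 := by
    split
    · exact W.count_a_one hmr (by omega)
    · exact W.count_a_zero (fun i hi hne =>
        by have := W.ainj i (by omega) j (by omega) hne; omega)
  rcases Nat.eq_zero_or_pos j with rfl | hjpos
  · have hB : ((range r).filter fun i => W.a (i + 1) = W.a 0).card = 0 :=
      W.count_b_zero (fun i hi hne =>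
        by have := W.ainj (i + 1) (by omega) 0 (by omega) hne; omega)
    have hM0 : adeg M (W.a 0) = 0 := adeg_M_zero h0
    omega
  · obtain ⟨j', rfl⟩ : ∃ j', j = j' + 1 := ⟨j - 1, by omega⟩
    have hB : ((range r).filter fun i => W.a (i + 1) = W.a (j' + 1)).card = 1 :=
      W.count_b_one (by omega)
    have hM1 : adeg M (W.a (j' + 1)) = 1 :=
      adeg_M_one hMa ⟨W.h j', W.bwdM j' (by omega)⟩
    omega

lemma adeg_N_off (W : Walk E M m r) (hmr : m ≤ r + 1) {x : A}
    (hx : ∀ j ≤ r, W.a j ≠ x) : adeg W.N x = adeg M x := by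
  have heq := W.adeg_eqn hmr x
  have hF : ((range m).filter fun i => W.a i = x).card = 0 :=
    W.count_a_zero (fun i hi => hx i (by omega))
  have hB : ((range r).filter fun i => W.a (i + 1) = x).card = 0 :=
    W.count_b_zero (fun i hi => hx (i + 1) (by omega))
  omega

lemma N_subset_E (W : Walk E M m r) (hME : M ⊆ E) : W.N ⊆ E := by
  intro e he
  rcases Finset.mem_union.mp he with h | h
  · exact hME (Finset.mem_sdiff.mp h).1
  · rw [mem_F] at h; obtain ⟨i, hi, rfl⟩ := h; exact W.fwdE i hi

/-- Swap surgery: for a walk with equally many forward and backward edges,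
`N` is a b-matching of the same size, matching the first agent instead of the last. -/
lemma swap_pkg {bH : H → ℕ} {k : ℕ} (W : Walk E M (k + 1) (k + 1))
    (hBM : IsBM E (fun _ => 1) bH M) (h0 : ¬ Matched M (W.a 0)) :
    IsBM E (fun _ => 1) bH W.N ∧ W.N.card = M.card ∧
      (∀ x, Matched W.N x ↔ x = W.a 0 ∨ (Matched M x ∧ x ≠ W.a (k + 1))) := by
  obtain ⟨hME, hMa', hMh⟩ := hBM
  have hMa : ∀ x, adeg M x ≤ 1 := fun x => hMa' x
  have hmr : k + 1 ≤ (k + 1) + 1 := by omega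
  refine ⟨⟨W.N_subset_E hME, ?_, ?_⟩, ?_, ?_⟩
  · intro x
    show adeg W.N x ≤ 1
    by_cases hon : ∃ j, j ≤ k + 1 ∧ W.a j = x
    · obtain ⟨j, hj, rfl⟩ := hon
      rw [W.adeg_N_on hmr hMa h0 hj]
      split <;> omega
    · rw [W.adeg_N_off hmr (fun j hj hne => hon ⟨j, hj, hne⟩)]
      exact hMa x
  · intro y
    have heq := W.hdeg_eqn hmr y
    have hle := hMh y
    omega
  · have := W.card_N hmr; omega
  · intro x
    rw [matched_iff_adeg]
    by_cases hon : ∃ j, j ≤ k + 1 ∧ W.a j = x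
    · obtain ⟨j, hj, rfl⟩ := hon
      rw [W.adeg_N_on hmr hMa h0 hj]
      by_cases hj0 : j = 0
      · subst hj0
        rw [if_pos (by omega)]
        exact ⟨fun _ => Or.inl rfl, fun _ => by omega⟩
      · have hne0 : W.a j ≠ W.a 0 := fun hne => hj0 (W.ainj j (by omega) 0 (by omega) hne)
        have hmM : Matched M (W.a j) := by
          obtain ⟨j', rfl⟩ : ∃ j', j = j' + 1 := ⟨j - 1, by omega⟩
          exact ⟨W.h j', W.bwdM j' (by omega)⟩
        by_cases hjl : j = k + 1
        · subst hjl
          rw [if_neg (by omega)]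
          constructor
          · intro hc; omega
          · rintro (hc | ⟨-, hc⟩)
            · exact absurd hc hne0
            · exact absurd rfl hc
        · rw [if_pos (by omega)]
          refine ⟨fun _ => Or.inr ⟨hmM, fun hc => hjl (W.ainj j (by omega) (k + 1)
            (by omega) hc)⟩, fun _ => by omega⟩
    · have hx : ∀ j ≤ k + 1, W.a j ≠ x := fun j hj hne => hon ⟨j, hj, hne⟩
      rw [W.adeg_N_off hmr hx, ← matched_iff_adeg]
      constructor
      · intro hm
        exact Or.inr ⟨hm, fun hc => hx (k + 1) (by omega) hc.symm⟩
      · rintro (hc | ⟨hm, -⟩)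
        · exact absurd hc.symm (hx 0 (by omega))
        · exact hm

/-- Augmenting surgery: a walk with one more forward than backward edge, whose final
house has spare capacity, yields a strictly larger b-matching. -/
lemma augment_pkg {bH : H → ℕ} {k : ℕ} (W : Walk E M (k + 1) k)
    (hBM : IsBM E (fun _ => 1) bH M) (h0 : ¬ Matched M (W.a 0))
    (hcap : hdeg M (W.h k) < bH (W.h k)) :
    IsBM E (fun _ => 1) bH W.N ∧ W.N.card = M.card + 1 := by
  obtain ⟨hME, hMa', hMh⟩ := hBM
  have hMa : ∀ x, adeg M x ≤ 1 := fun x => hMa' x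
  have hmr : k + 1 ≤ k + 1 := le_rfl
  refine ⟨⟨W.N_subset_E hME, ?_, ?_⟩, ?_⟩
  · intro x
    show adeg W.N x ≤ 1
    by_cases hon : ∃ j, j ≤ k ∧ W.a j = x
    · obtain ⟨j, hj, rfl⟩ := hon
      rw [W.adeg_N_on hmr hMa h0 hj]
      split <;> omega
    · rw [W.adeg_N_off hmr (fun j hj hne => hon ⟨j, hj, hne⟩)]
      exact hMa x
  · intro y
    have heq := W.hdeg_eqn hmr y
    have hsplit : ((range (k + 1)).filter fun i => W.h i = y).card
        = ((range k).filter fun i => W.h i = y).card + (if W.h k = y then 1 else 0) := by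
      rw [Finset.range_add_one, Finset.filter_insert]
      split
      · rw [Finset.card_insert_of_notMem (fun hc => by
          simp only [Finset.mem_filter, Finset.mem_range] at hc; omega)]
      · omega
    have hle := hMh y
    by_cases hy : W.h k = y
    · subst hy; rw [if_pos rfl] at hsplit; omega
    · rw [if_neg hy] at hsplit; omega
  · have := W.card_N hmr; omega

end Walk
end Surgery
section Extend
variable {A H : Type*} [DecidableEq A] [DecidableEq H]
namespace Walk
variable {E M : Finset (A × H)} {k : ℕ}

/-- Extend a walk ending at a house by a fresh matching edge into a new agent. -/
def extend (W : Walk E M (k + 1) k) (a' : A) (hM : (a', W.h k) ∈ M)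
    (hnew : ∀ i ≤ k, W.a i ≠ a') : Walk E M (k + 1) (k + 1) where
  a := Function.update W.a (k + 1) a'
  h := W.h
  fwdE := fun i hi => by
    rw [Function.update_of_ne (by omega)]
    exact W.fwdE i hi
  fwdN := fun i hi => by
    rw [Function.update_of_ne (by omega)]
    exact W.fwdN i hi
  bwdM := fun i hi => by
    rcases Nat.lt_or_ge i k with h' | h'
    · rw [Function.update_of_ne (by omega)]
      exact W.bwdM i h'
    · have : i = k := by omega
      subst this
      rw [Function.update_self]
      exact hM
  ainj := by
    intro i hi j hj hij
    rcases Nat.lt_or_ge i (k + 1) with hik | hik <;> rcases Nat.lt_or_ge j (k + 1) with hjk | hjk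
    · rw [Function.update_of_ne (by omega), Function.update_of_ne (by omega)] at hij
      exact W.ainj i (by omega) j (by omega) hij
    · have hj' : j = k + 1 := by omega
      subst hj'
      rw [Function.update_of_ne (by omega), Function.update_self] at hij
      exact absurd hij (hnew i (by omega))
    · have hi' : i = k + 1 := by omega
      subst hi'
      rw [Function.update_self, Function.update_of_ne (by omega)] at hij
      exact absurd hij.symm (hnew j (by omega))
    · omega

lemma extend_a_eq {W : Walk E M (k + 1) k} {a' : A} {hM : (a', W.h k) ∈ M}
    {hnew : ∀ i ≤ k, W.a i ≠ a'} {i : ℕ} (hi : i ≤ k) :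
    (W.extend a' hM hnew).a i = W.a i := by
  show Function.update W.a (k + 1) a' i = W.a i
  rw [Function.update_of_ne (by omega)]

lemma extend_a_last {W : Walk E M (k + 1) k} {a' : A} {hM : (a', W.h k) ∈ M}
    {hnew : ∀ i ≤ k, W.a i ≠ a'} :
    (W.extend a' hM hnew).a (k + 1) = a' := by
  show Function.update W.a (k + 1) a' (k + 1) = a'
  rw [Function.update_self]

lemma extend_h_eq {W : Walk E M (k + 1) k} {a' : A} {hM : (a', W.h k) ∈ M}
    {hnew : ∀ i ≤ k, W.a i ≠ a'} : (W.extend a' hM hnew).h = W.h := rfl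

/-- Extend a complete walk by a fresh forward edge from its last agent. -/
def extend2 (W : Walk E M (k + 1) (k + 1)) (h' : H)
    (hE : (W.a (k + 1), h') ∈ E) (hnM : (W.a (k + 1), h') ∉ M) :
    Walk E M (k + 2) (k + 1) where
  a := W.a
  h := Function.update W.h (k + 1) h'
  fwdE := fun i hi => by
    rcases Nat.lt_or_ge i (k + 1) with h'' | h''
    · rw [Function.update_of_ne (by omega)]
      exact W.fwdE i h''
    · have : i = k + 1 := by omega
      subst this
      rw [Function.update_self]
      exact hE
  fwdN := fun i hi => by
    rcases Nat.lt_or_ge i (k + 1) with h'' | h''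
    · rw [Function.update_of_ne (by omega)]
      exact W.fwdN i h''
    · have : i = k + 1 := by omega
      subst this
      rw [Function.update_self]
      exact hnM
  bwdM := fun i hi => by
    rw [Function.update_of_ne (by omega)]
    exact W.bwdM i hi
  ainj := W.ainj

lemma extend2_h_eq {W : Walk E M (k + 1) (k + 1)} {h' : H} {hE : (W.a (k + 1), h') ∈ E}
    {hnM : (W.a (k + 1), h') ∉ M} {i : ℕ} (hi : i ≤ k) :
    (W.extend2 h' hE hnM).h i = W.h i := by
  show Function.update W.h (k + 1) h' i = W.h i
  rw [Function.update_of_ne (by omega)]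

lemma extend2_h_last {W : Walk E M (k + 1) (k + 1)} {h' : H} {hE : (W.a (k + 1), h') ∈ E}
    {hnM : (W.a (k + 1), h') ∉ M} : (W.extend2 h' hE hnM).h (k + 1) = h' := by
  show Function.update W.h (k + 1) h' (k + 1) = h'
  rw [Function.update_self]

lemma extend2_a_eq {W : Walk E M (k + 1) (k + 1)} {h' : H} {hE : (W.a (k + 1), h') ∈ E}
    {hnM : (W.a (k + 1), h') ∉ M} : (W.extend2 h' hE hnM).a = W.a := rfl

/-- Reverse a complete walk, with respect to a second matching `S` containing the
forward edges and avoiding the backward edges. -/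
def rev (W : Walk E M (k + 1) (k + 1)) {S : Finset (A × H)} (hME : M ⊆ E)
    (hfwdS : ∀ i < k + 1, (W.a i, W.h i) ∈ S)
    (hbwdS : ∀ i < k + 1, (W.a (i + 1), W.h i) ∉ S) :
    Walk E S (k + 1) (k + 1) where
  a := fun i => W.a (k + 1 - i)
  h := fun i => W.h (k - i)
  fwdE := fun i hi => by
    show (W.a (k + 1 - i), W.h (k - i)) ∈ E
    rw [show k + 1 - i = (k - i) + 1 from by omega]
    exact hME (W.bwdM (k - i) (by omega))
  fwdN := fun i hi => by
    show (W.a (k + 1 - i), W.h (k - i)) ∉ S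
    rw [show k + 1 - i = (k - i) + 1 from by omega]
    exact hbwdS (k - i) (by omega)
  bwdM := fun i hi => by
    show (W.a (k + 1 - (i + 1)), W.h (k - i)) ∈ S
    rw [show k + 1 - (i + 1) = k - i from by omega]
    exact hfwdS (k - i) (by omega)
  ainj := fun i hi j hj hij => by
    have := W.ainj (k + 1 - i) (by omega) (k + 1 - j) (by omega) hij
    omega

/-- Convert a complete walk into an alternating path structure. -/
def toAlt (W : Walk E M (k + 1) (k + 1)) : AltAA E M k where
  a := fun i => W.a i.val
  h := fun i => W.h i.val
  fwd_mem := fun i => by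
    simp only [Fin.coe_castSucc]
    exact W.fwdE i.val i.isLt
  fwd_not := fun i => by
    simp only [Fin.coe_castSucc]
    exact W.fwdN i.val i.isLt
  bwd_mem := fun i => by
    simp only [Fin.val_succ]
    exact W.bwdM i.val i.isLt
  fwd_inj := fun i j hij => by
    have h1 : W.a i.val = W.a j.val := by
      have := congrArg Prod.fst hij
      simpa using this
    have := W.ainj i.val (by omega) j.val (by omega) h1
    exact Fin.ext this
  bwd_inj := fun i j hij => by
    have h1 : W.a (i.val + 1) = W.a (j.val + 1) := by
      have := congrArg Prod.fst hij
      simpa using this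
    have := W.ainj (i.val + 1) (by have := i.isLt; omega) (j.val + 1)
      (by have := j.isLt; omega) h1
    exact Fin.ext (by omega)

lemma toAlt_first (W : Walk E M (k + 1) (k + 1)) : (W.toAlt).first = W.a 0 := rfl

lemma toAlt_last (W : Walk E M (k + 1) (k + 1)) : (W.toAlt).last = W.a (k + 1) := rfl

end Walk
end Extend
section Fresh
variable {A H : Type*} [DecidableEq A] [DecidableEq H]
namespace Walk
variable {E M : Finset (A × H)} {k : ℕ}

lemma mem_N' {m r : ℕ} {W : Walk E M m r} {e : A × H} :
    e ∈ W.N ↔ (e ∈ M ∧ e ∉ W.B) ∨ e ∈ W.F := by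
  simp [Walk.N, Finset.mem_union, Finset.mem_sdiff]

lemma rev_a {W : Walk E M (k + 1) (k + 1)} {S : Finset (A × H)} {hME : M ⊆ E}
    {h1 : ∀ i < k + 1, (W.a i, W.h i) ∈ S} {h2 : ∀ i < k + 1, (W.a (i + 1), W.h i) ∉ S}
    {i : ℕ} : (W.rev hME h1 h2).a i = W.a (k + 1 - i) := rfl

lemma rev_h {W : Walk E M (k + 1) (k + 1)} {S : Finset (A × H)} {hME : M ⊆ E}
    {h1 : ∀ i < k + 1, (W.a i, W.h i) ∈ S} {h2 : ∀ i < k + 1, (W.a (i + 1), W.h i) ∉ S}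
    {i : ℕ} : (W.rev hME h1 h2).h i = W.h (k - i) := rfl

lemma augment_contra {bH : H → ℕ} (W : Walk E M (k + 1) k)
    (hM : IsMaxBM E (fun _ => 1) bH M) (h0 : ¬ Matched M (W.a 0)) :
    bH (W.h k) ≤ hdeg M (W.h k) := by
  by_contra hcap
  push_neg at hcap
  obtain ⟨hbm, hcard⟩ := W.augment_pkg hM.1 h0 hcap
  have := hM.2 W.N hbm
  omega

lemma fresh_edge {bH : H → ℕ} (W : Walk E M (k + 1) k) {S : Finset (A × H)}
    (hM : IsMaxBM E (fun _ => 1) bH M) (hS : IsBM E (fun _ => 1) bH S)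
    (h0 : ¬ Matched M (W.a 0)) (hfwdS : ∀ i < k + 1, (W.a i, W.h i) ∈ S) :
    ∃ a' : A, (a', W.h k) ∈ M ∧ (a', W.h k) ∉ S ∧
      ∀ i < k, (W.a (i + 1), W.h i) ≠ (a', W.h k) := by
  have hfull : hdeg M (W.h k) = bH (W.h k) :=
    le_antisymm (hM.1.2.2 (W.h k)) (W.augment_contra hM h0)
  by_contra hno
  push_neg at hno
  set y := W.h k with hy
  set MY := M.filter (fun e => e.2 = y) with hMY
  set UB := W.B.filter (fun e => e.2 = y) with hUB
  set FB := W.F.filter (fun e => e.2 = y) with hFB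
  have hUBsub : UB ⊆ MY := Finset.filter_subset_filter _ W.B_subset
  have hMYcard : MY.card = bH y := hfull
  have hUBcard : UB.card = ((range k).filter fun i => W.h i = y).card :=
    W.filter_B (fun e => e.2 = y)
  have hFBcard : FB.card = ((range (k + 1)).filter fun i => W.h i = y).card :=
    W.filter_F le_rfl (fun e => e.2 = y)
  have hsplit : ((range (k + 1)).filter fun i => W.h i = y).card
      = ((range k).filter fun i => W.h i = y).card + 1 := by
    rw [Finset.range_add_one, Finset.filter_insert, if_pos hy.symm,
      Finset.card_insert_of_notMem (fun hc => by
        simp only [Finset.mem_filter, Finset.mem_range] at hc; omega)]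
  have hkey : MY \ UB ⊆ S.filter (fun e => e.2 = y) := by
    rintro ⟨a1, y1⟩ he
    rw [Finset.mem_sdiff] at he
    obtain ⟨heM, heU⟩ := he
    rw [Finset.mem_filter] at heM
    have hy1 : y1 = y := heM.2
    subst hy1
    rw [Finset.mem_filter]
    refine ⟨?_, rfl⟩
    by_contra heS
    obtain ⟨i, hik, heq⟩ := hno a1 heM.1 heS
    exact heU (Finset.mem_filter.mpr ⟨mem_B.mpr ⟨i, hik, heq⟩, rfl⟩)
  have hFBsub : FB ⊆ S.filter (fun e => e.2 = y) := by
    apply Finset.filter_subset_filter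
    intro e he
    rw [mem_F] at he
    obtain ⟨i, hi, rfl⟩ := he
    exact hfwdS i hi
  have hdisj : Disjoint FB (MY \ UB) := by
    rw [Finset.disjoint_left]
    intro e he1 he2
    rw [hFB, Finset.mem_filter] at he1
    rw [Finset.mem_sdiff, hMY, Finset.mem_filter] at he2
    exact W.F_not e he1.1 he2.1.1
  have hunion : (FB ∪ (MY \ UB)) ⊆ S.filter (fun e => e.2 = y) :=
    Finset.union_subset hFBsub hkey
  have hcard1 : (FB ∪ (MY \ UB)).card = FB.card + (MY \ UB).card :=
    Finset.card_union_of_disjoint hdisj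
  have hcard2 : (MY \ UB).card = MY.card - UB.card := Finset.card_sdiff_of_subset hUBsub
  have hle1 : UB.card ≤ MY.card := Finset.card_le_card hUBsub
  have hle2 : (S.filter (fun e => e.2 = y)).card ≤ bH y := hS.2.2 y
  have hle3 : (FB ∪ (MY \ UB)).card ≤ (S.filter (fun e => e.2 = y)).card :=
    Finset.card_le_card hunion
  omega

lemma fresh_new (W : Walk E M (k + 1) k) (hMa : ∀ x, adeg M x ≤ 1)
    (h0 : ¬ Matched M (W.a 0)) {a' : A} (he1 : (a', W.h k) ∈ M)
    (he3 : ∀ i < k, (W.a (i + 1), W.h i) ≠ (a', W.h k)) :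
    ∀ i ≤ k, W.a i ≠ a' := by
  intro i hi hne
  rcases Nat.eq_zero_or_pos i with rfl | hp
  · rw [← hne] at he1
    exact h0 ⟨W.h k, he1⟩
  · obtain ⟨j, rfl⟩ : ∃ j, i = j + 1 := ⟨i - 1, by omega⟩
    have hb : (W.a (j + 1), W.h j) ∈ M := W.bwdM j (by omega)
    rw [← hne] at he1
    have := unique_edge hMa hb he1
    exact he3 j (by omega) (by rw [hne, this])
end Walk
end Fresh
section MainInduction
variable {A H : Type*} [Fintype A] [Fintype H] [DecidableEq A] [DecidableEq H]

open Classical in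
lemma walk_main {E : Finset (A × H)} {bH : H → ℕ} {A' : Finset A} {M : Finset (A × H)}
    (hM : IsMaxBM E (fun _ => 1) bH M)
    (hpath : ∀ (t : ℕ) (P : AltAA E M t),
      ¬ (P.first ∈ A' ∧ ¬ Matched M P.first ∧ P.last ∉ A')) :
    ∀ n : ℕ, ∀ (S : Finset (A × H)) (k : ℕ) (W : Walk E M (k + 1) k),
      IsMaxBM E (fun _ => 1) bH S →
      (∀ i < k + 1, (W.a i, W.h i) ∈ S) →
      (∀ i < k, (W.a (i + 1), W.h i) ∉ S) →
      W.a 0 ∈ A' → ¬ Matched M (W.a 0) → M.card ≤ n + k →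
      ∃ S', IsMaxBM E (fun _ => 1) bH S' ∧
        (univ.filter fun x : A => x ∈ A' ∧ Matched S' x).card
          = (univ.filter fun x : A => x ∈ A' ∧ Matched S x).card ∧
        (symmDiff M S').card < (symmDiff M S).card := by
  intro n
  induction n using Nat.strong_induction_on with
  | _ n ih =>
  intro S k W hS hfwdS hbwdS hA0 h0 hbound
  have hMa : ∀ x, adeg M x ≤ 1 := fun x => hM.1.2.1 x
  obtain ⟨a', he1, he2, he3⟩ := W.fresh_edge hM hS.1 h0 hfwdS
  have hnew := W.fresh_new hMa h0 he1 he3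
  set W2 := W.extend a' he1 hnew with hW2
  have hW2a : ∀ i ≤ k, W2.a i = W.a i := fun i hi => by
    rw [hW2]; exact Walk.extend_a_eq hi
  have hW2l : W2.a (k + 1) = a' := by rw [hW2]; exact Walk.extend_a_last
  have hMb : k + 1 ≤ M.card := by
    have hsub : W2.B ⊆ M := W2.B_subset
    have hcard : W2.B.card = k + 1 := W2.card_B
    have := Finset.card_le_card hsub
    omega
  have hfwdS2 : ∀ i < k + 1, (W2.a i, W2.h i) ∈ S := by
    intro i hi
    rw [hW2a i (by omega)]
    exact hfwdS i hi
  have hbwdS2 : ∀ i < k + 1, (W2.a (i + 1), W2.h i) ∉ S := by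
    intro i hi
    rcases Nat.lt_or_ge i k with h' | h'
    · rw [hW2a (i + 1) (by omega)]
      exact hbwdS i h'
    · have hik : i = k := by omega
      subst hik
      rw [hW2l]
      exact he2
  have hA02 : W2.a 0 ∈ A' := by rw [hW2a 0 (by omega)]; exact hA0
  have h02 : ¬ Matched M (W2.a 0) := by rw [hW2a 0 (by omega)]; exact h0
  by_cases hzA : a' ∈ A'
  · by_cases hzS : Matched S a'
    · -- the new agent is matched in S: extend the walk and recurse
      obtain ⟨h', hh'⟩ := hzS
      have hh'E : (W2.a (k + 1), h') ∈ E := by rw [hW2l]; exact hS.1.1 hh'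
      have hh'M : (W2.a (k + 1), h') ∉ M := by
        rw [hW2l]
        intro hc
        have hhk : h' = W.h k := unique_edge hMa hc he1
        rw [hhk] at hh'
        exact he2 hh'
      set W3 := W2.extend2 h' hh'E hh'M with hW3
      have hW3a : ∀ i, W3.a i = W2.a i := fun i => by rw [hW3]; exact rfl
      have hW3h : ∀ i ≤ k, W3.h i = W2.h i := fun i hi => by
        rw [hW3]; exact Walk.extend2_h_eq hi
      have hW3hl : W3.h (k + 1) = h' := by rw [hW3]; exact Walk.extend2_h_last
      have hn : 0 < n := by omega
      have fwd3 : ∀ i < k + 2, (W3.a i, W3.h i) ∈ S := by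
        intro i hi
        rcases Nat.lt_or_ge i (k + 1) with h'' | h''
        · rw [hW3a, hW3h i (by omega)]
          exact hfwdS2 i h''
        · have : i = k + 1 := by omega
          subst this
          rw [hW3a, hW3hl, hW2l]
          exact hh'
      have bwd3 : ∀ i < k + 1, (W3.a (i + 1), W3.h i) ∉ S := by
        intro i hi
        rw [hW3a, hW3h i (by omega)]
        exact hbwdS2 i hi
      have a03 : W3.a 0 ∈ A' := by rw [hW3a]; exact hA02
      have h03 : ¬ Matched M (W3.a 0) := by rw [hW3a]; exact h02
      exact ih (n - 1) (by omega) S (k + 1) W3 hS fwd3 bwd3 a03 h03 (by omega)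
    · -- the new agent is unmatched in S: swap S along the reversed walk
      set WR := W2.rev hM.1.1 hfwdS2 hbwdS2 with hWR
      have hWRa : ∀ i, WR.a i = W2.a (k + 1 - i) := fun i => by rw [hWR]; exact Walk.rev_a
      have hWRh : ∀ i, WR.h i = W2.h (k - i) := fun i => by rw [hWR]; exact Walk.rev_h
      have hWRa0 : WR.a 0 = a' := by rw [hWRa 0, Nat.sub_zero, hW2l]
      have hWRl : WR.a (k + 1) = W2.a 0 := by rw [hWRa (k + 1), Nat.sub_self]
      have h0R : ¬ Matched S (WR.a 0) := by rw [hWRa0]; exact hzS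
      obtain ⟨hbm, hcard, hchar⟩ := WR.swap_pkg hS.1 h0R
      have hFM : ∀ e ∈ WR.F, e ∈ M := by
        intro e he
        rw [Walk.mem_F] at he
        obtain ⟨i, hi, rfl⟩ := he
        rw [hWRa i, hWRh i, show k + 1 - i = (k - i) + 1 from by omega]
        exact W2.bwdM (k - i) (by omega)
      have hBnotM : ∀ e ∈ WR.B, e ∉ M := by
        intro e he
        rw [Walk.mem_B] at he
        obtain ⟨i, hi, rfl⟩ := he
        rw [hWRa (i + 1), hWRh i, show k + 1 - (i + 1) = k - i from by omega]
        exact W2.fwdN (k - i) (by omega)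
      refine ⟨WR.N, ⟨hbm, fun M'' h'' => by rw [hcard]; exact hS.2 M'' h''⟩, ?_, ?_⟩
      · -- matched counts agree
        set T := univ.filter fun x : A => x ∈ A' ∧ Matched S x with hT
        have hTeq : (univ.filter fun x : A => x ∈ A' ∧ Matched WR.N x)
            = insert a' (T.erase (W2.a 0)) := by
          ext x
          simp only [Finset.mem_filter, Finset.mem_univ, true_and, Finset.mem_insert,
            Finset.mem_erase, hT]
          rw [hchar x, hWRa0, hWRl]
          constructor
          · rintro ⟨hxA, hc | ⟨hm, hne⟩⟩
            · exact Or.inl hc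
            · exact Or.inr ⟨hne, hxA, hm⟩
          · rintro (rfl | ⟨hne, hxA, hm⟩)
            · exact ⟨hzA, Or.inl rfl⟩
            · exact ⟨hxA, Or.inr ⟨hm, hne⟩⟩
        rw [hTeq]
        have hw0T : W2.a 0 ∈ T := by
          rw [hT]
          simp only [Finset.mem_filter, Finset.mem_univ, true_and]
          exact ⟨hA02, ⟨W2.h 0, hfwdS2 0 (by omega)⟩⟩
        have hzT : a' ∉ T.erase (W2.a 0) := by
          intro hc
          have h2 := (Finset.mem_erase.mp hc).2
          rw [hT] at h2
          simp only [Finset.mem_filter] at h2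
          exact hzS h2.2.2
        rw [Finset.card_insert_of_notMem hzT, Finset.card_erase_of_mem hw0T]
        have : 0 < T.card := Finset.card_pos.mpr ⟨_, hw0T⟩
        omega
      · -- the symmetric difference strictly decreases
        have hsub : symmDiff M WR.N ⊆ symmDiff M S := by
          intro e he
          rw [Finset.mem_symmDiff] at he ⊢
          rcases he with ⟨heM, heN⟩ | ⟨heN, heM⟩
          · left
            refine ⟨heM, fun heS => ?_⟩
            apply heN
            rw [Walk.mem_N']
            by_cases heB : e ∈ WR.B
            · exact absurd heM (hBnotM e heB)
            · exact Or.inl ⟨heS, heB⟩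
          · right
            rw [Walk.mem_N'] at heN
            rcases heN with ⟨h1, -⟩ | h1
            · exact ⟨h1, heM⟩
            · exact absurd (hFM e h1) heM
        have he0 : (W2.a 0, W2.h 0) ∈ symmDiff M S := by
          rw [Finset.mem_symmDiff]
          right
          exact ⟨hfwdS2 0 (by omega), W2.fwdN 0 (by omega)⟩
        have he0' : (W2.a 0, W2.h 0) ∉ symmDiff M WR.N := by
          rw [Finset.mem_symmDiff]
          rintro (⟨hc, -⟩ | ⟨hc, -⟩)
          · exact W2.fwdN 0 (by omega) hc
          · rw [Walk.mem_N'] at hc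
            rcases hc with ⟨-, hc2⟩ | hc1
            · apply hc2
              rw [Walk.mem_B]
              refine ⟨k, by omega, ?_⟩
              rw [hWRa (k + 1), hWRh k, Nat.sub_self, Nat.sub_self]
            · exact W2.fwdN 0 (by omega) (hFM _ hc1)
        exact Finset.card_lt_card ((Finset.ssubset_iff_of_subset hsub).mpr
          ⟨_, he0, he0'⟩)
  · -- the new agent is outside A' : forbidden alternating path, contradiction
    exact absurd ⟨by rw [Walk.toAlt_first]; exact hA02,
      by rw [Walk.toAlt_first]; exact h02,
      by rw [Walk.toAlt_last, hW2l]; exact hzA⟩ (hpath k W2.toAlt)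
end MainInduction
section AltBridge
variable {A H : Type*} [DecidableEq A] [DecidableEq H]

lemma altAA_a_inj {E M : Finset (A × H)} {t : ℕ} (P : AltAA E M t)
    (hMa : ∀ x, adeg M x ≤ 1) (h0 : ¬ Matched M (P.a 0)) : Function.Injective P.a := by
  intro i j hij
  rcases Fin.eq_zero_or_eq_succ i with rfl | ⟨i', rfl⟩ <;>
    rcases Fin.eq_zero_or_eq_succ j with rfl | ⟨j', rfl⟩
  · rfl
  · exact absurd ⟨P.h j', by rw [hij]; exact P.bwd_mem j'⟩ h0
  · exact absurd ⟨P.h i', by rw [← hij]; exact P.bwd_mem i'⟩ h0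
  · have e2' : (P.a i'.succ, P.h j') ∈ M := by rw [hij]; exact P.bwd_mem j'
    have hh := unique_edge hMa (P.bwd_mem i') e2'
    have := P.bwd_inj i' j' (by rw [hij, hh])
    rw [this]

/-- The walk underlying an alternating path. -/
def altWalk {E M : Finset (A × H)} {t : ℕ} (P : AltAA E M t)
    (hinj : Function.Injective P.a) : Walk E M (t + 1) (t + 1) where
  a := fun n => P.a ⟨min n (t + 1), by omega⟩
  h := fun n => P.h ⟨min n t, by omega⟩
  fwdE := fun i hi => by
    show (P.a ⟨min i (t + 1), by omega⟩, P.h ⟨min i t, by omega⟩) ∈ E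
    have h1 : (⟨min i (t + 1), by omega⟩ : Fin (t + 2)) = (⟨i, hi⟩ : Fin (t + 1)).castSucc := by
      apply Fin.ext
      show min i (t + 1) = i
      omega
    have h2 : (⟨min i t, by omega⟩ : Fin (t + 1)) = ⟨i, hi⟩ := by
      apply Fin.ext
      show min i t = i
      omega
    rw [h1, h2]
    exact P.fwd_mem ⟨i, hi⟩
  fwdN := fun i hi => by
    show (P.a ⟨min i (t + 1), by omega⟩, P.h ⟨min i t, by omega⟩) ∉ M
    have h1 : (⟨min i (t + 1), by omega⟩ : Fin (t + 2)) = (⟨i, hi⟩ : Fin (t + 1)).castSucc := by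
      apply Fin.ext
      show min i (t + 1) = i
      omega
    have h2 : (⟨min i t, by omega⟩ : Fin (t + 1)) = ⟨i, hi⟩ := by
      apply Fin.ext
      show min i t = i
      omega
    rw [h1, h2]
    exact P.fwd_not ⟨i, hi⟩
  bwdM := fun i hi => by
    show (P.a ⟨min (i + 1) (t + 1), by omega⟩, P.h ⟨min i t, by omega⟩) ∈ M
    have h1 : (⟨min (i + 1) (t + 1), by omega⟩ : Fin (t + 2)) = (⟨i, hi⟩ : Fin (t + 1)).succ := by
      apply Fin.ext
      show min (i + 1) (t + 1) = i + 1
      omega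
    have h2 : (⟨min i t, by omega⟩ : Fin (t + 1)) = ⟨i, hi⟩ := by
      apply Fin.ext
      show min i t = i
      omega
    rw [h1, h2]
    exact P.bwd_mem ⟨i, hi⟩
  ainj := fun i hi j hj hij => by
    have h2 := congrArg Fin.val (hinj hij)
    have h3 : min i (t + 1) = min j (t + 1) := h2
    omega

lemma altWalk_a {E M : Finset (A × H)} {t : ℕ} {P : AltAA E M t}
    (hinj : Function.Injective P.a) (i : Fin (t + 2)) :
    (altWalk P hinj).a i.val = P.a i := by
  show P.a ⟨min i.val (t + 1), by omega⟩ = P.a i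
  congr 1
  apply Fin.ext
  show min i.val (t + 1) = i.val
  have := i.isLt
  omega

lemma altWalk_h {E M : Finset (A × H)} {t : ℕ} {P : AltAA E M t}
    (hinj : Function.Injective P.a) (i : Fin (t + 1)) :
    (altWalk P hinj).h i.val = P.h i := by
  show P.h ⟨min i.val t, by omega⟩ = P.h i
  congr 1
  apply Fin.ext
  show min i.val t = i.val
  have := i.isLt
  omega

lemma altWalk_edges {E M : Finset (A × H)} {t : ℕ} {P : AltAA E M t}
    {hinj : Function.Injective P.a} :
    P.edges = (altWalk P hinj).F ∪ (altWalk P hinj).B := by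
  have hfwdEq : ∀ i : Fin (t + 1),
      ((altWalk P hinj).a i.val, (altWalk P hinj).h i.val) = (P.a i.castSucc, P.h i) :=
    fun i => Prod.ext (altWalk_a hinj i.castSucc) (altWalk_h hinj i)
  have hbwdEq : ∀ i : Fin (t + 1),
      ((altWalk P hinj).a (i.val + 1), (altWalk P hinj).h i.val) = (P.a i.succ, P.h i) :=
    fun i => Prod.ext (altWalk_a hinj i.succ) (altWalk_h hinj i)
  ext e
  unfold AltAA.edges
  simp only [Finset.mem_union, Finset.mem_image, Finset.mem_univ, true_and,
    Walk.mem_F, Walk.mem_B]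
  constructor
  · rintro (⟨i, rfl⟩ | ⟨i, rfl⟩)
    · exact Or.inl ⟨i.val, i.isLt, hfwdEq i⟩
    · exact Or.inr ⟨i.val, i.isLt, hbwdEq i⟩
  · rintro (⟨i, hi, rfl⟩ | ⟨i, hi, rfl⟩)
    · exact Or.inl ⟨⟨i, hi⟩, (hfwdEq ⟨i, hi⟩).symm⟩
    · exact Or.inr ⟨⟨i, hi⟩, (hbwdEq ⟨i, hi⟩).symm⟩

lemma altWalk_symmDiff {E M : Finset (A × H)} {t : ℕ} {P : AltAA E M t}
    {hinj : Function.Injective P.a} :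
    symmDiff M P.edges = (altWalk P hinj).N := by
  ext e
  rw [altWalk_edges (hinj := hinj), Finset.mem_symmDiff, Walk.mem_N', Finset.mem_union]
  have h1 : e ∈ (altWalk P hinj).F → e ∉ M := (altWalk P hinj).F_not e
  have h2 : e ∈ (altWalk P hinj).B → e ∈ M := fun h => (altWalk P hinj).B_subset h
  tauto
end AltBridge

section UB
variable {A H : Type*} [Fintype A] [Fintype H] [DecidableEq A] [DecidableEq H]

open Classical in
lemma ub_aux {E : Finset (A × H)} {bH : H → ℕ} {A' : Finset A} {M : Finset (A × H)}
    (hM : IsMaxBM E (fun _ => 1) bH M)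
    (hpath : ∀ (t : ℕ) (P : AltAA E M t),
      ¬ (P.first ∈ A' ∧ ¬ Matched M P.first ∧ P.last ∉ A')) :
    ∀ n : ℕ, ∀ S : Finset (A × H), IsMaxBM E (fun _ => 1) bH S → (symmDiff M S).card ≤ n →
      (univ.filter fun x : A => x ∈ A' ∧ Matched S x).card
        ≤ (univ.filter fun x : A => x ∈ A' ∧ Matched M x).card := by
  intro n
  induction n using Nat.strong_induction_on with
  | _ n ih =>
  intro S hS hsd
  by_cases hle : (univ.filter fun x : A => x ∈ A' ∧ Matched S x).card
      ≤ (univ.filter fun x : A => x ∈ A' ∧ Matched M x).card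
  · exact hle
  push_neg at hle
  have hex : ∃ x ∈ (univ.filter fun x : A => x ∈ A' ∧ Matched S x),
      x ∉ (univ.filter fun x : A => x ∈ A' ∧ Matched M x) := by
    by_contra hc
    push_neg at hc
    exact absurd (Finset.card_le_card hc) (by omega)
  obtain ⟨a1, hx1, hx2⟩ := hex
  simp only [Finset.mem_filter, Finset.mem_univ, true_and] at hx1 hx2
  obtain ⟨hA1, hS1⟩ := hx1
  have hM1 : ¬ Matched M a1 := fun hm => hx2 ⟨hA1, hm⟩
  obtain ⟨h0, hh0⟩ := hS1
  have hh0M : (a1, h0) ∉ M := fun hc => hM1 ⟨h0, hc⟩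
  obtain ⟨S', c1, c2, c3⟩ := walk_main hM hpath M.card S 0
    ({ a := fun _ => a1, h := fun _ => h0,
       fwdE := fun _ _ => hS.1.1 hh0, fwdN := fun _ _ => hh0M,
       bwdM := fun i hi => absurd hi (by omega),
       ainj := fun i hi j hj _ => by omega } : Walk E M (0 + 1) 0)
    hS (fun _ _ => hh0) (fun i hi => absurd hi (by omega)) hA1 hM1 (by omega)
  have := ih (symmDiff M S').card (by omega) S' c1 le_rfl
  omega
end UB

open Classical in
/-- Let `M` be a maximum b-matching (agents having capacity 1),
`A' ⊆ A`, and `B'` the set of vertices of `A'` matched in `M`.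
(i) If `P` is an `M`-alternating path beginning with a non-`M`-edge and ending with an
`M`-edge whose first agent is an unmatched vertex of `A'` and whose last agent is not in
`A'`, then `M ⊕ P` is a maximum b-matching and the set of vertices of `A'` matched in
`M ⊕ P` is exactly `B' ∪ {a_1}`.
(ii) If no such path exists, then `|B'|` equals the maximum, over all maximum
b-matchings `M*`, of the number of vertices of `A'` matched in `M*`. -/
theorem alternating_path_and_max_matched
    {A H : Type*} [Fintype A] [Fintype H] [DecidableEq A] [DecidableEq H]
    (E : Finset (A × H)) (bH : H → ℕ) (A' : Finset A)
    (M : Finset (A × H)) (hM : IsMaxBM E (fun _ => 1) bH M) :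
    (∀ (t : ℕ) (P : AltAA E M t), P.first ∈ A' → ¬ Matched M P.first → P.last ∉ A' →
      IsMaxBM E (fun _ => 1) bH (symmDiff M P.edges) ∧
        (Finset.univ.filter fun a : A => a ∈ A' ∧ Matched (symmDiff M P.edges) a) =
          insert P.first (Finset.univ.filter fun a : A => a ∈ A' ∧ Matched M a)) ∧
    ((∀ (t : ℕ) (P : AltAA E M t),
        ¬ (P.first ∈ A' ∧ ¬ Matched M P.first ∧ P.last ∉ A')) →
      IsGreatest
        {c : ℕ | ∃ Mstar : Finset (A × H), IsMaxBM E (fun _ => 1) bH Mstar ∧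
          c = (Finset.univ.filter fun a : A => a ∈ A' ∧ Matched Mstar a).card}
        (Finset.univ.filter fun a : A => a ∈ A' ∧ Matched M a).card) := by

  constructor
  · -- Part (i)
    intro t P hfirst hunm hlast
    have hMa : ∀ x, adeg M x ≤ 1 := fun x => hM.1.2.1 x
    have hinj : Function.Injective P.a := altAA_a_inj P hMa hunm
    set W := altWalk P hinj with hW
    have hW0 : W.a 0 = P.first := altWalk_a hinj 0
    have hWl : W.a (t + 1) = P.last := altWalk_a hinj (Fin.last (t + 1))
    have h0W : ¬ Matched M (W.a 0) := by rw [hW0]; exact hunm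
    obtain ⟨hbm, hcard, hchar⟩ := W.swap_pkg hM.1 h0W
    have hsd : symmDiff M P.edges = W.N := altWalk_symmDiff
    rw [hsd]
    refine ⟨⟨hbm, fun M'' h'' => by rw [hcard]; exact hM.2 M'' h''⟩, ?_⟩
    ext x
    simp only [Finset.mem_filter, Finset.mem_univ, true_and, Finset.mem_insert]
    rw [hchar x, hW0, hWl]
    constructor
    · rintro ⟨hxA, rfl | ⟨hm, hne⟩⟩
      · exact Or.inl rfl
      · exact Or.inr ⟨hxA, hm⟩
    · rintro (rfl | ⟨hxA, hm⟩)
      · exact ⟨hfirst, Or.inl rfl⟩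
      · exact ⟨hxA, Or.inr ⟨hm, fun hc => hlast (hc ▸ hxA)⟩⟩
  · -- Part (ii)
    intro hpath
    constructor
    · exact ⟨M, hM, rfl⟩
    · rintro c ⟨S, hS, rfl⟩
      exact ub_aux hM hpath (symmDiff M S).card S hS le_rfl
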